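/- Let ψ : ℝ → ℝ be continuous with ∫_ℝ ψ(x) dx = 0 and such that for every N ∈ ℕ there is C_N > 0 with |ψ(x)| ≤ C_N(1+|x|)^{−N} for all x. Let f : ℝ → ℝ be bounded and measurable, let ω be a regular modulus of continuity, and let t ∈ ℝ be such that limsup_{s→t} |f(s)−f(t)| / ω(|s−t|) < ∞. Define the wavelet coefficients c_{j,k} = 2^j ∫_ℝ f(x) ψ(2^j x − k) dx. Then limsup_{j→∞} |c_{j,k_j(t)}| / ω(2^{−j}) < ∞, where k_j(t) = ⌊2^j t⌋. -/

import Mathlib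

/-!
Doubling makes `w` grow polynomially: `w (r * x) ≤ (2 * r) ^ a * w x` for `r ≥ 1`. Since `f` is
bounded, the pointwise condition at `t` then holds globally: `|f x - f t| ≤ B * w |x - t|`.
Because `ψ` has mean zero, the substitution `y = 2 ^ j * x - k` writes the coefficient as
`∫ (f ((y + k) / 2 ^ j) - f t) * ψ y`, and `|(y + k) / 2 ^ j - t| ≤ (1 + |y|) * 2 ^ (-j)` bounds
the integrand by `B * (2 * (1 + |y|)) ^ a * w (2 ^ (-j)) * |ψ y|`, which is integrable by the
decay of `ψ`.
-/

open MeasureTheory Filter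

def IsModulusOfContinuity (w : ℝ → ℝ) : Prop :=
  (∀ x : ℝ, 0 ≤ x → 0 ≤ w x) ∧ MonotoneOn w (Set.Ici (0 : ℝ)) ∧ w 0 = 0 ∧
    ∃ C : ℝ, 0 < C ∧ ∀ x : ℝ, 0 ≤ x → w (2 * x) ≤ C * w x

def IsRegularModulus (w : ℝ → ℝ) : Prop :=
  IsModulusOfContinuity w ∧ ∃ N : ℕ, ∃ C : ℝ, 0 < C ∧ ∀ J : ℕ,
    ((∑' j : ℕ, (2 : ℝ) ^ ((N : ℤ) * ((J : ℤ) + (j : ℤ))) * w ((2 : ℝ) ^ (-((J : ℤ) + (j : ℤ)))))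
      ≤ C * (2 : ℝ) ^ ((N : ℤ) * (J : ℤ)) * w ((2 : ℝ) ^ (-(J : ℤ)))) ∧
    ((∑' i : ℕ, (2 : ℝ) ^ (((N : ℤ) + 1) * ((J : ℤ) - (i : ℤ))) * w ((2 : ℝ) ^ (-((J : ℤ) - (i : ℤ)))))
      ≤ C * (2 : ℝ) ^ (((N : ℤ) + 1) * (J : ℤ)) * w ((2 : ℝ) ^ (-(J : ℤ))))

open Set Topology

namespace IsModulusOfContinuity

variable {w : ℝ → ℝ}

theorem exists_le_two_mul_pow_mul (hw : IsModulusOfContinuity w) :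
    ∃ a : ℕ, ∀ x, 0 ≤ x → ∀ r, 1 ≤ r → w (r * x) ≤ (2 * r) ^ a * w x := by
  obtain ⟨hw0, hmono, -, C, -, hdbl⟩ := hw
  obtain ⟨a, ha⟩ := pow_unbounded_of_one_lt C (one_lt_two (α := ℝ))
  have hiter : ∀ n : ℕ, ∀ x, 0 ≤ x → w (2 ^ n * x) ≤ (2 ^ n) ^ a * w x := by
    intro n
    induction n with
    | zero => simp
    | succ n ih =>
      intro x hx
      calc w (2 ^ (n + 1) * x) = w (2 ^ n * (2 * x)) := by ring_nf
        _ ≤ (2 ^ n) ^ a * w (2 * x) := ih _ (by positivity)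
        _ ≤ (2 ^ n) ^ a * (2 ^ a * w x) := by
          gcongr
          exact (hdbl x hx).trans (mul_le_mul_of_nonneg_right ha.le (hw0 x hx))
        _ = (2 ^ (n + 1)) ^ a * w x := by ring
  refine ⟨a, fun x hx r hr => ?_⟩
  obtain ⟨n, hn, hrn⟩ := exists_nat_pow_near hr one_lt_two
  have hw0x := hw0 x hx
  calc w (r * x) ≤ w (2 ^ (n + 1) * x) :=
        hmono (mem_Ici.2 (by positivity)) (mem_Ici.2 (by positivity)) (by gcongr)
    _ ≤ (2 ^ (n + 1)) ^ a * w x := hiter _ x hx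
    _ ≤ (2 * r) ^ a * w x := by
      gcongr
      rw [pow_succ']
      gcongr

theorem forall_pos_or_forall_eq_zero (hw : IsModulusOfContinuity w) :
    (∀ x, 0 < x → 0 < w x) ∨ ∀ y, 0 ≤ y → w y = 0 := by
  refine or_iff_not_imp_left.2 fun h y hy => ?_
  simp only [not_forall, not_lt] at h
  obtain ⟨x, hx, hwx⟩ := h
  obtain ⟨a, hgrowth⟩ := hw.exists_le_two_mul_pow_mul
  have hwx0 : w x = 0 := le_antisymm hwx (hw.1 x hx.le)
  have hr : 1 ≤ max (y / x) 1 := le_max_right _ _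
  refine le_antisymm ?_ (hw.1 y hy)
  calc w y ≤ w (max (y / x) 1 * x) := by
        refine hw.2.1 (mem_Ici.2 hy) (mem_Ici.2 (by positivity)) ?_
        calc y = y / x * x := (div_mul_cancel₀ y hx.ne').symm
          _ ≤ max (y / x) 1 * x := by gcongr; exact le_max_left _ _
    _ ≤ (2 * max (y / x) 1) ^ a * w x := hgrowth x hx.le _ hr
    _ = 0 := by rw [hwx0, mul_zero]

end IsModulusOfContinuity

theorem exists_eventually_le_of_limsup_ofReal_lt_top {α : Type*} {l : Filter α} {g : α → ℝ}
    (h : limsup (fun s => ENNReal.ofReal (g s)) l < ⊤) : ∃ B : ℝ, ∀ᶠ s in l, g s ≤ B := by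
  obtain ⟨r, hr, -⟩ := ENNReal.lt_iff_exists_nnreal_btwn.1 h
  refine ⟨r, (eventually_lt_of_limsup_lt hr).mono fun s hs => ?_⟩
  simpa using (ENNReal.ofReal_le_iff_le_toReal ENNReal.coe_ne_top).1 hs.le

theorem limsup_ofReal_lt_top_of_forall_le {α : Type*} {l : Filter α} {g : α → ℝ} {c : ℝ}
    (h : ∀ s, g s ≤ c) : limsup (fun s => ENNReal.ofReal (g s)) l < ⊤ :=
  (limsup_le_of_le (by isBoundedDefault)
    (Eventually.of_forall fun s => ENNReal.ofReal_le_ofReal (h s))).trans_lt ENNReal.ofReal_lt_top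

theorem exists_abs_sub_le_mul_of_limsup_lt_top {f w : ℝ → ℝ} {t : ℝ}
    (hw : IsModulusOfContinuity w) (hpos : ∀ x, 0 < x → 0 < w x) (hfb : ∃ M, ∀ x, |f x| ≤ M)
    (hreg : limsup (fun s => ENNReal.ofReal (|f s - f t| / w |s - t|)) (𝓝[≠] t) < ⊤) :
    ∃ B, 0 ≤ B ∧ ∀ x, |f x - f t| ≤ B * w |x - t| := by
  obtain ⟨hw0, hmono, -⟩ := hw
  obtain ⟨M, hM⟩ := hfb
  have hM0 : 0 ≤ M := (abs_nonneg _).trans (hM t)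
  obtain ⟨B, hB⟩ := exists_eventually_le_of_limsup_ofReal_lt_top hreg
  rw [eventually_nhdsWithin_iff, Metric.eventually_nhds_iff] at hB
  obtain ⟨δ, hδ, hloc⟩ := hB
  have hwδ := hpos δ hδ
  refine ⟨max B 0 + 2 * M / w δ, by positivity, fun x => ?_⟩
  rcases eq_or_ne x t with rfl | hxt
  · simpa using mul_nonneg (by positivity) (hw0 0 le_rfl)
  have hwx : 0 < w |x - t| := hpos _ (abs_pos.2 (sub_ne_zero.2 hxt))
  rcases lt_or_ge |x - t| δ with hclose | hfar
  · calc |f x - f t| ≤ B * w |x - t| :=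
          (div_le_iff₀ hwx).1 (hloc (by rwa [Real.dist_eq]) hxt)
      _ ≤ (max B 0 + 2 * M / w δ) * w |x - t| := by
          gcongr
          exact (le_max_left B 0).trans (le_add_of_nonneg_right (by positivity))
  · calc |f x - f t| ≤ 2 * M := by linarith [abs_sub (f x) (f t), hM x, hM t]
      _ = 2 * M / w δ * w δ := (div_mul_cancel₀ _ hwδ.ne').symm
      _ ≤ 2 * M / w δ * w |x - t| := by
          gcongr
          exact hmono (mem_Ici.2 hδ.le) (mem_Ici.2 (abs_nonneg _)) hfar
      _ ≤ (max B 0 + 2 * M / w δ) * w |x - t| := by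
          gcongr
          exact le_add_of_nonneg_left (le_max_right B 0)

theorem integrable_one_add_abs_pow_mul {ψ : ℝ → ℝ} (hψ : AEStronglyMeasurable ψ) {a : ℕ} {C : ℝ}
    (hC : ∀ x, |ψ x| ≤ C * (1 + |x|) ^ (-((a + 2 : ℕ) : ℤ))) :
    Integrable fun x => (1 + |x|) ^ a * ψ x := by
  have hC0 : 0 ≤ C := by simpa using (abs_nonneg _).trans (hC 0)
  refine (integrable_inv_one_add_sq.const_mul C).mono'
    ((by fun_prop : Continuous fun x : ℝ => (1 + |x|) ^ a).aestronglyMeasurable.mul hψ)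
    (ae_of_all _ fun x => ?_)
  have hx : 0 < 1 + |x| := by positivity
  rw [norm_mul, Real.norm_eq_abs, abs_of_pos (pow_pos hx a)]
  calc (1 + |x|) ^ a * |ψ x| ≤ (1 + |x|) ^ a * (C * (1 + |x|) ^ (-((a + 2 : ℕ) : ℤ))) := by
        gcongr
        exact hC x
    _ = C * ((1 + |x|) ^ 2)⁻¹ := by
        rw [zpow_neg, zpow_natCast, pow_add]
        field_simp
    _ ≤ C * (1 + x ^ 2)⁻¹ := by
        gcongr
        nlinarith [sq_abs x, abs_nonneg x]

theorem mul_integral_mul_comp_mul_sub (g ψ : ℝ → ℝ) {s : ℝ} (hs : 0 < s) (k : ℝ) :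
    s * ∫ x, g x * ψ (s * x - k) = ∫ y, g ((y + k) / s) * ψ y := by
  set G : ℝ → ℝ := fun y => g ((y + k) / s) * ψ y
  have hG : ∀ x, g x * ψ (s * x - k) = G (s * x - k) := fun x => by
    simp only [G, sub_add_cancel, mul_div_cancel_left₀ x hs.ne']
  simp_rw [hG]
  rw [Measure.integral_comp_mul_left (fun z => G (z - k)), integral_sub_right_eq_self G k,
    abs_of_pos (inv_pos.2 hs), smul_eq_mul, ← mul_assoc, mul_inv_cancel₀ hs.ne', one_mul]

section WaveletCoefficient

variable {f w : ℝ → ℝ} {a : ℕ} {t B s k : ℝ}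

theorem abs_comp_div_sub_le (hB : 0 ≤ B) (hf : ∀ x, |f x - f t| ≤ B * w |x - t|)
    (hmono : MonotoneOn w (Ici 0))
    (hgrowth : ∀ x, 0 ≤ x → ∀ r, 1 ≤ r → w (r * x) ≤ (2 * r) ^ a * w x)
    (hs : 0 < s) (hk : |s * t - k| ≤ 1) (y : ℝ) :
    |f ((y + k) / s) - f t| ≤ B * 2 ^ a * w s⁻¹ * (1 + |y|) ^ a := by
  have hdist : |(y + k) / s - t| ≤ (1 + |y|) * s⁻¹ := by
    rw [show (y + k) / s - t = (y - (s * t - k)) * s⁻¹ by field_simp; ring, abs_mul,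
      abs_of_pos (inv_pos.2 hs)]
    gcongr
    linarith [abs_sub y (s * t - k)]
  calc |f ((y + k) / s) - f t| ≤ B * w |(y + k) / s - t| := hf _
    _ ≤ B * w ((1 + |y|) * s⁻¹) := by
        gcongr
        exact hmono (mem_Ici.2 (abs_nonneg _)) (mem_Ici.2 (by positivity)) hdist
    _ ≤ B * ((2 * (1 + |y|)) ^ a * w s⁻¹) := by
        gcongr
        exact hgrowth _ (by positivity) _ (by linarith [abs_nonneg y])
    _ = B * 2 ^ a * w s⁻¹ * (1 + |y|) ^ a := by rw [mul_pow]; ring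

theorem abs_mul_integral_mul_comp_mul_sub_le {ψ : ℝ → ℝ} (hψ : Integrable ψ)
    (hψ0 : ∫ x, ψ x = 0) (hψa : Integrable fun y => (1 + |y|) ^ a * ψ y) (hfm : Measurable f)
    (hfb : ∃ M, ∀ x, |f x| ≤ M) (hB : 0 ≤ B) (hf : ∀ x, |f x - f t| ≤ B * w |x - t|)
    (hmono : MonotoneOn w (Ici 0))
    (hgrowth : ∀ x, 0 ≤ x → ∀ r, 1 ≤ r → w (r * x) ≤ (2 * r) ^ a * w x)
    (hs : 0 < s) (hk : |s * t - k| ≤ 1) :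
    |s * ∫ x, f x * ψ (s * x - k)| ≤
      B * 2 ^ a * (∫ y, ‖(1 + |y|) ^ a * ψ y‖) * w s⁻¹ := by
  obtain ⟨M, hM⟩ := hfb
  have hFψ : Integrable fun y => f ((y + k) / s) * ψ y :=
    hψ.bdd_mul (c := M) (hfm.comp (by fun_prop)).aestronglyMeasurable
      (ae_of_all _ fun y => hM _)
  have hcentered : ∫ y, f ((y + k) / s) * ψ y = ∫ y, (f ((y + k) / s) - f t) * ψ y := by
    simp_rw [sub_mul]
    rw [integral_sub hFψ (hψ.const_mul _), integral_const_mul, hψ0, mul_zero, sub_zero]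
  rw [mul_integral_mul_comp_mul_sub f ψ hs k, hcentered, ← Real.norm_eq_abs]
  refine (norm_integral_le_of_norm_le (hψa.norm.const_mul (B * 2 ^ a * w s⁻¹))
    (ae_of_all _ fun y => ?_)).trans_eq (by rw [integral_const_mul]; ring)
  rw [norm_mul, norm_mul, Real.norm_eq_abs, Real.norm_eq_abs, Real.norm_eq_abs,
    abs_of_nonneg (by positivity : (0 : ℝ) ≤ (1 + |y|) ^ a)]
  calc |f ((y + k) / s) - f t| * |ψ y| ≤ B * 2 ^ a * w s⁻¹ * (1 + |y|) ^ a * |ψ y| := by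
        gcongr
        exact abs_comp_div_sub_le hB hf hmono hgrowth hs hk y
    _ = B * 2 ^ a * w s⁻¹ * ((1 + |y|) ^ a * |ψ y|) := by ring

end WaveletCoefficient

theorem stmt_13 (ψ : ℝ → ℝ) (hψc : Continuous ψ)
    (hψdecay : ∀ N : ℕ, ∃ C : ℝ, 0 < C ∧ ∀ x : ℝ, |ψ x| ≤ C * (1 + |x|) ^ (-(N : ℤ)))
    (hψint : ∫ x : ℝ, ψ x = 0)
    (f : ℝ → ℝ) (hfm : Measurable f) (hfb : ∃ M : ℝ, ∀ x : ℝ, |f x| ≤ M)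
    (w : ℝ → ℝ) (hw : IsRegularModulus w)
    (t : ℝ)
    (hreg : Filter.limsup (fun s => ENNReal.ofReal (|f s - f t| / w |s - t|))
      (nhdsWithin t {t}ᶜ) < ⊤) :
    Filter.limsup (fun j : ℕ => ENNReal.ofReal
      (|(2 : ℝ) ^ j * ∫ x : ℝ, f x * ψ ((2 : ℝ) ^ j * x - (⌊(2 : ℝ) ^ j * t⌋ : ℝ))| /
        w ((2 : ℝ) ^ (-(j : ℤ))))) Filter.atTop < ⊤ := by
  obtain ⟨hwmod, -⟩ := hw
  rcases hwmod.forall_pos_or_forall_eq_zero with hpos | hzero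
  swap
  -- every quotient is then a division by `w (2 ^ (-j)) = 0`, hence `0`
  · refine limsup_ofReal_lt_top_of_forall_le (c := 0) fun j => ?_
    rw [hzero _ (by positivity), div_zero]
  obtain ⟨a, hgrowth⟩ := hwmod.exists_le_two_mul_pow_mul
  obtain ⟨B, hB0, hB⟩ := exists_abs_sub_le_mul_of_limsup_lt_top hwmod hpos hfb hreg
  obtain ⟨C₀, -, hC₀⟩ := hψdecay 2
  obtain ⟨C, -, hC⟩ := hψdecay (a + 2)
  have hψ : Integrable ψ := by
    simpa using integrable_one_add_abs_pow_mul hψc.aestronglyMeasurable (a := 0) hC₀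
  have hψa := integrable_one_add_abs_pow_mul hψc.aestronglyMeasurable hC
  refine limsup_ofReal_lt_top_of_forall_le
    (c := B * 2 ^ a * (∫ y, ‖(1 + |y|) ^ a * ψ y‖)) fun j => ?_
  have hk : |(2 : ℝ) ^ j * t - ⌊(2 : ℝ) ^ j * t⌋| ≤ 1 := by
    rw [Int.self_sub_floor, abs_of_nonneg (Int.fract_nonneg _)]
    exact (Int.fract_lt_one _).le
  rw [div_le_iff₀ (hpos _ (by positivity)), zpow_neg, zpow_natCast]
  exact abs_mul_integral_mul_comp_mul_sub_le hψ hψint hψa hfm hfb hB0 hB hwmod.2.1 hgrowth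
    (by positivity) hk
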